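/- arXiv:1902.02781 — 6 statements merged into one kernel-verified Lean document; each statement's English description precedes it below -/
import Mathlib

section
/- Let p ∈ [0,1] and l > 0 be real numbers. Then the sum, over all natural numbers n with 0 ≤ n ≤ m and |n/m − p| ≤ l, of C(m,n) p^n (1−p)^(m−n), tends to 1 as m → ∞. (Jakob Bernoulli's theorem: however narrow the limits ±l are chosen, the probability that the observed frequency deviates from p by no more than l can be made arbitrarily close to 1 by sufficiently increasing the number of trials.) -/
/-!
The binomial weights are the Bernstein basis polynomials evaluated at `p`. They sum to `1`, and
the mean squared deviation of the frequency `n / m` from `p` under them is `p (1 - p) / m`.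
By Chebyshev's inequality the weight of the frequencies farther than `l` from `p` is therefore
at most `p (1 - p) / (l ^ 2 m)`, which tends to `0`.
-/

open Finset Filter Topology Polynomial

theorem bernsteinPolynomial_eval {R : Type*} [CommRing R] (m n : ℕ) (p : R) :
    (bernsteinPolynomial R m n).eval p = m.choose n * p ^ n * (1 - p) ^ (m - n) := by
  simp [bernsteinPolynomial]

theorem sum_bernsteinPolynomial_eval {R : Type*} [CommRing R] (m : ℕ) (p : R) :
    ∑ n ∈ range (m + 1), (bernsteinPolynomial R m n).eval p = 1 := by
  simpa [eval_finsetSum] using congrArg (eval p) (bernsteinPolynomial.sum R m)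

theorem sum_sq_div_sub_mul_bernsteinPolynomial_eval {K : Type*} [Field K] [CharZero K]
    {m : ℕ} (hm : m ≠ 0) (p : K) :
    ∑ n ∈ range (m + 1), ((n : K) / m - p) ^ 2 * (bernsteinPolynomial K m n).eval p
      = p * (1 - p) / m := by
  have h := congrArg (fun q : K[X] => q.eval p / (m : K) ^ 2) (bernsteinPolynomial.variance K m)
  simp only [eval_finsetSum, eval_mul, eval_pow, eval_sub, eval_X, eval_natCast,
    eval_one, nsmul_eq_mul, sum_div] at h
  have hm' : (m : K) ≠ 0 := Nat.cast_ne_zero.mpr hm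
  convert h using 1
  · refine sum_congr rfl fun n _ => ?_
    field_simp
    ring
  · field_simp

theorem bernsteinPolynomial_eval_nonneg {p : ℝ} (hp : p ∈ Set.Icc (0 : ℝ) 1) (m n : ℕ) :
    0 ≤ (bernsteinPolynomial ℝ m n).eval p := by
  obtain ⟨hp0, hp1⟩ := hp
  have hq0 : 0 ≤ 1 - p := sub_nonneg.mpr hp1
  rw [bernsteinPolynomial_eval]
  positivity

theorem Finset.sum_filter_lt_abs_le_sum_sq_mul_div_sq {ι : Type*} (s : Finset ι) {w x : ι → ℝ}
    (hw : ∀ i ∈ s, 0 ≤ w i) {l : ℝ} (hl : 0 < l) :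
    ∑ i ∈ s with l < |x i|, w i ≤ (∑ i ∈ s, x i ^ 2 * w i) / l ^ 2 := by
  rw [le_div_iff₀ (by positivity), sum_mul]
  calc ∑ i ∈ s with l < |x i|, w i * l ^ 2
      ≤ ∑ i ∈ s with l < |x i|, x i ^ 2 * w i := by
        refine sum_le_sum fun i hi => ?_
        rw [mem_filter] at hi
        have hsq : l ^ 2 ≤ x i ^ 2 := by
          simpa only [sq_abs] using pow_le_pow_left₀ hl.le hi.2.le 2
        rw [mul_comm]
        exact mul_le_mul_of_nonneg_right hsq (hw i hi.1)
    _ ≤ ∑ i ∈ s, x i ^ 2 * w i :=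
        sum_le_sum_of_subset_of_nonneg (filter_subset _ _)
          fun i hi _ => mul_nonneg (sq_nonneg _) (hw i hi)

theorem sum_bernsteinPolynomial_eval_far_le {p : ℝ} (hp : p ∈ Set.Icc (0 : ℝ) 1) {m : ℕ}
    (hm : m ≠ 0) {l : ℝ} (hl : 0 < l) :
    ∑ n ∈ range (m + 1) with l < |((n : ℕ) : ℝ) / m - p|, (bernsteinPolynomial ℝ m n).eval p
      ≤ p * (1 - p) / l ^ 2 / m := by
  calc _ ≤ (∑ n ∈ range (m + 1), ((n : ℝ) / m - p) ^ 2 * (bernsteinPolynomial ℝ m n).eval p)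
        / l ^ 2 :=
        (range (m + 1)).sum_filter_lt_abs_le_sum_sq_mul_div_sq
          (fun n _ => bernsteinPolynomial_eval_nonneg hp m n) hl
    _ = p * (1 - p) / l ^ 2 / m := by
        rw [sum_sq_div_sub_mul_bernsteinPolynomial_eval hm]
        ring

theorem stmt_4 (p : ℝ) (hp : p ∈ Set.Icc (0 : ℝ) 1) (l : ℝ) (hl : 0 < l) :
    Filter.Tendsto (fun m : ℕ =>
        ∑ n ∈ (Finset.range (m + 1)).filter (fun n : ℕ => |(n : ℝ) / m - p| ≤ l),
          (m.choose n : ℝ) * p ^ n * (1 - p) ^ (m - n))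
      Filter.atTop (nhds 1) := by
  simp_rw [← bernsteinPolynomial_eval]
  have hlower : Tendsto (fun m : ℕ => 1 - p * (1 - p) / l ^ 2 / m) atTop (𝓝 1) := by
    simpa using (tendsto_const_nhds (x := (1 : ℝ))).sub
      (tendsto_const_div_atTop_nhds_zero_nat (p * (1 - p) / l ^ 2))
  refine tendsto_of_tendsto_of_tendsto_of_le_of_le' hlower tendsto_const_nhds ?_ ?_
  · filter_upwards [eventually_ne_atTop 0] with m hm
    have hsplit := sum_filter_add_sum_filter_not (range (m + 1))
      (fun n : ℕ => |(n : ℝ) / m - p| ≤ l) fun n => (bernsteinPolynomial ℝ m n).eval p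
    simp only [not_le] at hsplit
    linarith [sum_bernsteinPolynomial_eval m p, sum_bernsteinPolynomial_eval_far_le hp hm hl]
  · refine Eventually.of_forall fun m => ?_
    rw [← sum_bernsteinPolynomial_eval m p]
    exact sum_le_sum_of_subset_of_nonneg (filter_subset _ _)
      fun n _ _ => bernsteinPolynomial_eval_nonneg hp m n
end

section
/- Let m₁ be a natural number, let s be a finite index set, let k_j be real numbers with ∑_{j∈s} k_j = 1, let p_j be real numbers, and set p = ∑_{j∈s} k_j p_j. Then ∑_{j∈s} k_j · ∑_{n=0}^{m₁} C(m₁,n) p_j^n (1−p_j)^(m₁−n) · (n − m₁·p)² = m₁·p(1−p) + m₁(m₁−1) · ∑_{j∈s} k_j (p_j − p)². -/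
/-!
Conditionally on the block having chance `p_j`, the number of successes is binomial, so its second
moment about `c = m₁ p` is `m₁ p_j (1 - p_j) + (m₁ p_j - c)²` (Mathlib's Bernstein variance identity,
shifted from the mean to `c`). Averaging over `j` with weights `k_j` and writing
`p_j (1 - p_j) = p_j - p² - 2p (p_j - p) - (p_j - p)²` turns the binomial parts into
`m₁ p (1 - p) - m₁ ∑ k_j (p_j - p)²`, while the squared shifts contribute `m₁² ∑ k_j (p_j - p)²`.
-/

open Finset Polynomial

namespace bernsteinPolynomial

variable {R : Type*} [CommRing R]

theorem sum_sub_sq_mul (n : ℕ) (c : R[X]) :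
    ∑ ν ∈ range (n + 1), ((ν : R[X]) - c) ^ 2 * bernsteinPolynomial R n ν
      = (n : R[X]) * X * (1 - X) + ((n : R[X]) * X - c) ^ 2 := by
  set a : R[X] := (n : R[X]) * X
  have mean : ∑ ν ∈ range (n + 1), (ν : R[X]) * bernsteinPolynomial R n ν = a := by
    simpa only [nsmul_eq_mul] using sum_smul R n
  have var : ∑ ν ∈ range (n + 1), (a - ν) ^ 2 * bernsteinPolynomial R n ν = a * (1 - X) := by
    simpa only [nsmul_eq_mul] using variance R n
  calc _ = ∑ ν ∈ range (n + 1), ((a - ν) ^ 2 * bernsteinPolynomial R n ν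
            + 2 * (a - c) * (ν * bernsteinPolynomial R n ν)
            + (c ^ 2 - a ^ 2) * bernsteinPolynomial R n ν) :=
        sum_congr rfl fun ν _ => by ring
    _ = a * (1 - X) + (a - c) ^ 2 := by
        rw [sum_add_distrib, sum_add_distrib, ← mul_sum, ← mul_sum, mean, var, sum]
        ring

end bernsteinPolynomial

theorem sum_choose_mul_pow_mul_sub_sq {R : Type*} [CommRing R] (m : ℕ) (q c : R) :
    ∑ n ∈ range (m + 1), (m.choose n : R) * q ^ n * (1 - q) ^ (m - n) * ((n : R) - c) ^ 2
      = m * q * (1 - q) + (m * q - c) ^ 2 := by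
  have h := congrArg (eval q) (bernsteinPolynomial.sum_sub_sq_mul m (C c))
  simp only [eval_finsetSum, bernsteinPolynomial, eval_mul, eval_pow, eval_sub, eval_natCast,
    eval_one, eval_X, eval_C, eval_add] at h
  rw [← h]
  exact sum_congr rfl fun n _ => by ring

theorem stmt_10 {ι : Type*} (m₁ : ℕ) (s : Finset ι) (k p : ι → ℝ)
    (hk : ∑ j ∈ s, k j = 1) :
    ∑ j ∈ s, k j * ∑ n ∈ Finset.range (m₁ + 1),
        (m₁.choose n : ℝ) * (p j) ^ n * (1 - p j) ^ (m₁ - n)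
          * ((n : ℝ) - (m₁ : ℝ) * ∑ i ∈ s, k i * p i) ^ 2
      = (m₁ : ℝ) * (∑ i ∈ s, k i * p i) * (1 - ∑ i ∈ s, k i * p i)
        + (m₁ : ℝ) * ((m₁ : ℝ) - 1) * ∑ j ∈ s, k j * (p j - ∑ i ∈ s, k i * p i) ^ 2 := by
  set P := ∑ i ∈ s, k i * p i with hP
  calc _ = ∑ j ∈ s, k j * (m₁ * (1 - 2 * P) * p j + m₁ * P ^ 2
              + m₁ * (m₁ - 1) * (p j - P) ^ 2) := by
          refine sum_congr rfl fun j _ => ?_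
          rw [sum_choose_mul_pow_mul_sub_sq]
          ring
    _ = m₁ * (1 - 2 * P) * P + m₁ * ∑ j ∈ s, k j * P ^ 2
          + m₁ * (m₁ - 1) * ∑ j ∈ s, k j * (p j - P) ^ 2 := by
          simp only [mul_add, sum_add_distrib, mul_left_comm (k _), ← mul_sum, ← hP]
    _ = _ := by rw [← sum_mul, hk]; ring
end

section
/- Let s be a finite index set, let k_i be real weights with k_i ≥ 0 for all i and ∑_{i∈s} k_i = 1, and let z_i be real numbers with a ≤ z_i ≤ b for all i ∈ s. Then 0 ≤ ∑_{i∈s} k_i z_i² − (∑_{i∈s} k_i z_i)² ≤ (b−a)²/4. -/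
/-!
Writing `m = ∑ kᵢ zᵢ`, the quantity is `∑ kᵢ (zᵢ - m)²`, hence nonnegative. For the upper bound,
`(b - zᵢ)(zᵢ - a) ≥ 0` gives `zᵢ² ≤ (a + b) zᵢ - ab`; averaging bounds the quantity by
`(b - m)(m - a)` (Bhatia–Davis), and a product of two numbers with sum `b - a` is at most
`(b - a)² / 4` (Popoviciu).
-/

namespace Finset

variable {ι R : Type*} {s : Finset ι} {k z : ι → R}

theorem sum_mul_sq_sub_sq_eq_sum_mul_sq_sub [CommRing R] (hk : ∑ i ∈ s, k i = 1) :
    ∑ i ∈ s, k i * z i ^ 2 - (∑ i ∈ s, k i * z i) ^ 2 =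
      ∑ i ∈ s, k i * (z i - ∑ j ∈ s, k j * z j) ^ 2 := by
  set m := ∑ j ∈ s, k j * z j
  symm
  calc ∑ i ∈ s, k i * (z i - m) ^ 2
      = ∑ i ∈ s, (k i * z i ^ 2 - 2 * m * (k i * z i) + m ^ 2 * k i) :=
        sum_congr rfl fun _ _ ↦ by ring
    _ = ∑ i ∈ s, k i * z i ^ 2 - 2 * m * m + m ^ 2 * ∑ i ∈ s, k i := by
        rw [sum_add_distrib, sum_sub_distrib, ← mul_sum, ← mul_sum]
    _ = ∑ i ∈ s, k i * z i ^ 2 - m ^ 2 := by rw [hk]; ring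

theorem sum_mul_sq_sub_sq_le_sub_mul_sub [CommRing R] [LinearOrder R] [IsStrictOrderedRing R]
    {a b : R} (hk0 : ∀ i ∈ s, 0 ≤ k i) (hk : ∑ i ∈ s, k i = 1)
    (hz : ∀ i ∈ s, z i ∈ Set.Icc a b) :
    ∑ i ∈ s, k i * z i ^ 2 - (∑ i ∈ s, k i * z i) ^ 2 ≤
      (b - ∑ i ∈ s, k i * z i) * (∑ i ∈ s, k i * z i - a) := by
  have hsq : ∑ i ∈ s, k i * z i ^ 2 ≤ ∑ i ∈ s, k i * ((a + b) * z i - a * b) := by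
    refine sum_le_sum fun i hi ↦ mul_le_mul_of_nonneg_left ?_ (hk0 i hi)
    obtain ⟨hai, hib⟩ := hz i hi
    nlinarith [mul_nonneg (sub_nonneg.2 hib) (sub_nonneg.2 hai)]
  have hlin : ∑ i ∈ s, k i * ((a + b) * z i - a * b) = (a + b) * ∑ i ∈ s, k i * z i - a * b := by
    simp only [mul_sub, mul_left_comm (k _), sum_sub_distrib, ← mul_sum, ← sum_mul, hk, one_mul]
  linear_combination hsq + hlin

end Finset

theorem stmt_12 {ι : Type*} (s : Finset ι) (k z : ι → ℝ) (a b : ℝ)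
    (hk0 : ∀ i ∈ s, 0 ≤ k i) (hk : ∑ i ∈ s, k i = 1)
    (hz : ∀ i ∈ s, z i ∈ Set.Icc a b) :
    0 ≤ (∑ i ∈ s, k i * (z i) ^ 2) - (∑ i ∈ s, k i * z i) ^ 2 ∧
    (∑ i ∈ s, k i * (z i) ^ 2) - (∑ i ∈ s, k i * z i) ^ 2 ≤ (b - a) ^ 2 / 4 := by
  refine ⟨?_, ?_⟩
  · rw [Finset.sum_mul_sq_sub_sq_eq_sum_mul_sq_sub hk]
    exact Finset.sum_nonneg fun i hi ↦ mul_nonneg (hk0 i hi) (sq_nonneg _)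
  · set m := ∑ i ∈ s, k i * z i
    calc _ ≤ (b - m) * (m - a) := Finset.sum_mul_sq_sub_sq_le_sub_mul_sub hk0 hk hz
      _ ≤ (b - a) ^ 2 / 4 := by
        have := four_mul_le_sq_add (b - m) (m - a)
        rw [sub_add_sub_cancel] at this
        linarith
end

section
/- If v₁, v₂, v₃ are real numbers with v₁ > 1/2, v₂ ≥ 0, v₃ ≥ 0 and v₂ + v₃ < 1, then v₁v₂ + v₁v₃ + v₂v₃ − 2v₁v₂v₃ < v₁; that is, the probability of a correct majority decision of the three-judge tribunal is then strictly smaller than the chance of correctness of judge A alone, so joining judges B and C to A diminishes the chance of a proper verdict. -/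
theorem stmt_17 (v₁ v₂ v₃ : ℝ) (h1 : 1 / 2 < v₁) (h2 : 0 ≤ v₂) (h3 : 0 ≤ v₃)
    (h23 : v₂ + v₃ < 1) :
    v₁ * v₂ + v₁ * v₃ + v₂ * v₃ - 2 * v₁ * v₂ * v₃ < v₁ := by
  nlinarith [mul_nonneg h2 h3, mul_pos (sub_pos.2 h23) (by linarith : (0:ℝ) < v₁)]
end

section
/- Let v be a real number with 0 < v < 1 and let n, j be natural numbers with j ≤ n. Then v^n (1−v)^j / (v^n (1−v)^j + v^j (1−v)^n) = v^(n−j) / (v^(n−j) + (1−v)^(n−j)); that is, the probability that a decision carried by n votes against j is proper depends only on the difference n − j between the positive and negative votes, and equals the probability of a unanimous decision of a tribunal of n − j judges. -/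
theorem stmt_18 (v : ℝ) (hv0 : 0 < v) (hv1 : v < 1) (n j : ℕ) (hj : j ≤ n) :
    v ^ n * (1 - v) ^ j / (v ^ n * (1 - v) ^ j + v ^ j * (1 - v) ^ n)
      = v ^ (n - j) / (v ^ (n - j) + (1 - v) ^ (n - j)) := by
  have h1 : (0:ℝ) < 1 - v := by linarith
  have hn : n = j + (n - j) := by omega
  rw [hn]
  have hne : v ^ j * (1 - v) ^ j ≠ 0 := by positivity
  rw [pow_add, pow_add]
  rw [show v ^ j * v ^ (n - j) * (1 - v) ^ j = v ^ j * (1 - v) ^ j * v ^ (n - j) by ring,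
      show v ^ j * ((1 - v) ^ j * (1 - v) ^ (n - j)) = v ^ j * (1 - v) ^ j * (1 - v) ^ (n - j) by ring,
      ← mul_add, mul_div_mul_left _ _ hne]
  simp
end

section
/- Let c > 1/2 be a real number and let v : ℕ → ℝ satisfy c ≤ v_i ≤ 1 for all i. Then the quotient (∏_{i<n} v_i) / (∏_{i<n} v_i + ∏_{i<n} (1 − v_i)) tends to 1 as n → ∞; that is, if all of n agreeing witnesses have chances of verity exceeding a fixed bound above 1/2, the probability of the truth of their common testimony approaches certainty as n increases. -/
/-! Since `c ≤ v ≤ 1`, every factor satisfies `1 - v ≤ r v` with `r = (1 - c) / c < 1`, hence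
`∏ (1 - vᵢ) ≤ rⁿ ∏ vᵢ`: the ratio of the two products tends to `0`, and
`P / (P + Q) = (1 + Q / P)⁻¹` tends to `1`. -/

open Filter Topology Finset

theorem tendsto_div_self_add_nhds_one {α : Type*} {l : Filter α} {a b : α → ℝ}
    (ha : ∀ x, a x ≠ 0) (hba : Tendsto (fun x => b x / a x) l (𝓝 0)) :
    Tendsto (fun x => a x / (a x + b x)) l (𝓝 1) := by
  have hinv : Tendsto (fun x => (1 + b x / a x)⁻¹) l (𝓝 1) := by
    simpa using (tendsto_const_nhds (x := (1 : ℝ)).add hba).inv₀ (by norm_num)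
  refine hinv.congr fun x => ?_
  rw [one_add_div (ha x), inv_div]

theorem one_sub_le_mul_of_le {c x : ℝ} (hc : 0 < c) (hcx : c ≤ x) :
    1 - x ≤ (1 - c) / c * x := by
  rw [div_mul_eq_mul_div, le_div_iff₀ hc]
  nlinarith

theorem Finset.prod_le_pow_card_mul_prod {ι R : Type*} [CommSemiring R] [PartialOrder R]
    [IsOrderedRing R] {s : Finset ι} {f g : ι → R} {r : R}
    (hf : ∀ i ∈ s, 0 ≤ f i) (hfg : ∀ i ∈ s, f i ≤ r * g i) :
    ∏ i ∈ s, f i ≤ r ^ #s * ∏ i ∈ s, g i := by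
  rw [← prod_const, ← prod_mul_distrib]
  exact prod_le_prod hf hfg

theorem stmt_19 (c : ℝ) (hc : 1 / 2 < c) (v : ℕ → ℝ)
    (hv : ∀ i, c ≤ v i ∧ v i ≤ 1) :
    Filter.Tendsto (fun n : ℕ =>
        (∏ i ∈ Finset.range n, v i) /
          ((∏ i ∈ Finset.range n, v i) + ∏ i ∈ Finset.range n, (1 - v i)))
      Filter.atTop (nhds 1) := by
  have hc0 : 0 < c := by linarith
  set r := (1 - c) / c
  have hr0 : 0 ≤ r := div_nonneg (by linarith [(hv 0).1, (hv 0).2]) hc0.le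
  have hr1 : r < 1 := (div_lt_one hc0).2 (by linarith)
  have hP : ∀ n, 0 < ∏ i ∈ range n, v i := fun n =>
    prod_pos fun i _ => hc0.trans_le (hv i).1
  have hQ : ∀ n, 0 ≤ ∏ i ∈ range n, (1 - v i) := fun n =>
    prod_nonneg fun i _ => sub_nonneg.2 (hv i).2
  have hQP : ∀ n, ∏ i ∈ range n, (1 - v i) ≤ r ^ n * ∏ i ∈ range n, v i := fun n => by
    simpa using prod_le_pow_card_mul_prod (s := range n) (fun i _ => sub_nonneg.2 (hv i).2)
      fun i _ => one_sub_le_mul_of_le hc0 (hv i).1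
  refine tendsto_div_self_add_nhds_one (fun n => (hP n).ne') ?_
  refine squeeze_zero (fun n => div_nonneg (hQ n) (hP n).le) (fun n => ?_)
    (tendsto_pow_atTop_nhds_zero_of_lt_one hr0 hr1)
  exact (div_le_iff₀ (hP n)).2 (hQP n)
end
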